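/- For any real matrices A ∈ ℝ^{m×r}, B ∈ ℝ^{n×r}, | ‖ABᵀ‖_* − (‖A‖_F² + ‖B‖_F²)/2 | ≤ √(‖AᵀA − BᵀB‖_*) · (‖A‖_* + ‖B‖_*)/2. -/

import Mathlib

open Matrix

/-- Squared Frobenius norm of a real matrix. -/
noncomputable def frobSq {m n : ℕ} (A : Matrix (Fin m) (Fin n) ℝ) : ℝ :=
  ∑ i, ∑ j, (A i j) ^ 2

/-- Frobenius norm. -/
noncomputable def frobNorm {m n : ℕ} (A : Matrix (Fin m) (Fin n) ℝ) : ℝ :=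
  Real.sqrt (frobSq A)

lemma wwT_posSemidef {m n : ℕ} (W : Matrix (Fin m) (Fin n) ℝ) :
    (W * Wᵀ).PosSemidef := by
  simpa [Matrix.conjTranspose_eq_transpose_of_trivial] using
    W.posSemidef_self_mul_conjTranspose

/-- Nuclear norm: trace of the PSD square root of `W * Wᵀ`. -/
noncomputable def nuclearNorm {m n : ℕ} (W : Matrix (Fin m) (Fin n) ℝ) : ℝ :=
  ((wwT_posSemidef W).1.eigenvectorUnitary.1 *
    diagonal ((√·) ∘ (wwT_posSemidef W).1.eigenvalues) *
    (star (wwT_posSemidef W).1.eigenvectorUnitary : Matrix (Fin m) (Fin m) ℝ)).trace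

/-!
Put `X = √(AᵀA)` and `Y = √(BᵀB)`, so that `‖A‖_F² = tr X²`, `‖A‖_* = tr X` and
`X² - Y² = AᵀA - BᵀB`. Polar decompositions give `tr (X Y) ≤ ‖ABᵀ‖_* ≤ (‖A‖_F² + ‖B‖_F²) / 2`,
so `(‖A‖_F² + ‖B‖_F²) / 2 - ‖ABᵀ‖_*` lies between `0` and `tr (X - Y)² / 2`.

Diagonalize `X - Y = ∑ dᵢ vᵢ vᵢᵀ`. Positivity of `X` and `Y` gives `|dᵢ| ≤ eᵢ := vᵢᵀ (X + Y) vᵢ`.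
Since `tr ((X - Y)(X² - Y²)) = tr ((X - Y)² (X + Y)) = ∑ dᵢ² eᵢ`, testing `X² - Y²` against the
contraction `(X - Y) / c`, `c = maxᵢ |dᵢ|`, yields `c³ ≤ c ‖X² - Y²‖_*`, i.e. `c ≤ √‖X² - Y²‖_*`.
Hence `tr (X - Y)² = ∑ dᵢ² ≤ c ∑ eᵢ ≤ √‖X² - Y²‖_* · tr (X + Y)`.
-/

open scoped MatrixOrder

namespace Matrix

variable {l m n : Type*} [Fintype l] [Fintype m] [Fintype n]

lemma trace_transpose_mul_le (M N : Matrix m n ℝ) :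
    (Mᵀ * N).trace ≤ ((Mᵀ * M).trace + (Nᵀ * N).trace) / 2 := by
  have h := (posSemidef_conjTranspose_mul_self (M - N)).trace_nonneg
  have hNM : (Nᵀ * M).trace = (Mᵀ * N).trace := by
    rw [← trace_transpose, transpose_mul, transpose_transpose]
  rw [conjTranspose_eq_transpose_of_trivial, transpose_sub, Matrix.sub_mul, Matrix.mul_sub,
    Matrix.mul_sub, trace_sub, trace_sub, trace_sub, hNM] at h
  linarith

lemma trace_sub_mul_mul_self_sub_mul_self {R : Type*} [CommRing R] (X Y : Matrix n n R) :
    ((X - Y) * (X * X - Y * Y)).trace = ((X - Y) * (X - Y) * (X + Y)).trace := by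
  have hcomm : (X - Y) * (X * X - Y * Y) - (X - Y) * (X - Y) * (X + Y)
      = X * (Y * X) - X * (X * Y) + (Y * (X * Y) - Y * (Y * X)) := by noncomm_ring
  have hcycle : ∀ A B C : Matrix n n R, (A * (B * C)).trace = (C * (A * B)).trace := fun A B C => by
    rw [← Matrix.mul_assoc, trace_mul_comm]
  rw [← sub_eq_zero, ← trace_sub, hcomm, trace_add, trace_sub, trace_sub, hcycle X Y X,
    hcycle Y X Y, sub_self, sub_self, add_zero]

variable [DecidableEq n]

lemma transpose_sqrt (M : Matrix n n ℝ) : (CFC.sqrt M)ᵀ = CFC.sqrt M :=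
  (isHermitian_iff_isSymm.1 (CFC.sqrt_nonneg M).isSelfAdjoint).eq

/-- `‖K‖ ≤ 1` for the spectral norm. -/
def IsContraction (K : Matrix m n ℝ) : Prop :=
  (1 - Kᵀ * K).PosSemidef

lemma IsContraction.mul [DecidableEq l] {K : Matrix m n ℝ} {L : Matrix n l ℝ}
    (hK : IsContraction K) (hL : IsContraction L) : IsContraction (K * L) := by
  have h : 1 - (K * L)ᵀ * (K * L) = (1 - Lᵀ * L) + Lᵀ * (1 - Kᵀ * K) * L := by
    simp only [transpose_mul, Matrix.mul_sub, Matrix.sub_mul, Matrix.mul_one, Matrix.mul_assoc]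
    abel
  unfold IsContraction
  rw [h]
  exact hL.add <| by
    simpa [conjTranspose_eq_transpose_of_trivial] using hK.conjTranspose_mul_mul_same L

lemma IsContraction.trace_transpose_mul_self_mul_le {K : Matrix m n ℝ} (hK : IsContraction K)
    (M : Matrix n l ℝ) :
    ((K * M)ᵀ * (K * M)).trace ≤ (Mᵀ * M).trace := by
  have h := (hK.conjTranspose_mul_mul_same M).trace_nonneg
  rw [conjTranspose_eq_transpose_of_trivial, Matrix.mul_sub, Matrix.sub_mul, Matrix.mul_one,
    trace_sub] at h
  rw [transpose_mul]
  simp only [Matrix.mul_assoc] at h ⊢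
  linarith

lemma IsContraction.trace_mul_le {P K : Matrix n n ℝ} (hP : P.PosSemidef)
    (hK : IsContraction K) : (P * K).trace ≤ P.trace := by
  set S := CFC.sqrt P
  have hSS : S * S = P := CFC.sqrt_mul_sqrt_self P (nonneg_iff_posSemidef.2 hP)
  have hS : Sᵀ = S := transpose_sqrt P
  calc (P * K).trace = (Sᵀ * (K * S)).trace := by
        rw [← hSS, hS, Matrix.mul_assoc, trace_mul_comm, Matrix.mul_assoc]
    _ ≤ ((Sᵀ * S).trace + ((K * S)ᵀ * (K * S)).trace) / 2 := trace_transpose_mul_le S (K * S)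
    _ ≤ ((Sᵀ * S).trace + (Sᵀ * S).trace) / 2 := by
        gcongr; exact hK.trace_transpose_mul_self_mul_le S
    _ = P.trace := by rw [hS, hSS]; ring

lemma isContraction_of_mul_transpose_mul_eq_self {U : Matrix m n ℝ} (hU : U * Uᵀ * U = U) :
    IsContraction U := by
  have h : 1 - Uᵀ * U = (1 - Uᵀ * U)ᵀ * (1 - Uᵀ * U) := by
    have hidem : Uᵀ * U * (Uᵀ * U) = Uᵀ * U := by
      rw [← Matrix.mul_assoc, Matrix.mul_assoc Uᵀ U Uᵀ, Matrix.mul_assoc Uᵀ, hU]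
    rw [transpose_sub, transpose_one, transpose_mul, transpose_transpose, Matrix.sub_mul,
      Matrix.mul_sub, Matrix.mul_sub, hidem]
    simp
  unfold IsContraction
  rw [h, ← conjTranspose_eq_transpose_of_trivial]
  exact posSemidef_conjTranspose_mul_self _

lemma isContraction_transpose_of_mul_transpose_mul_eq_self {U : Matrix n m ℝ}
    (hU : U * Uᵀ * U = U) : IsContraction Uᵀ := by
  refine isContraction_of_mul_transpose_mul_eq_self ?_
  simpa [Matrix.mul_assoc] using congrArg transpose hU

lemma conj_diagonal_mul_conj_diagonal {V : Matrix n n ℝ} (hV : Vᵀ * V = 1) (a b : n → ℝ) :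
    V * diagonal a * Vᵀ * (V * diagonal b * Vᵀ) = V * diagonal (a * b) * Vᵀ := by
  calc V * diagonal a * Vᵀ * (V * diagonal b * Vᵀ)
      = V * (diagonal a * (Vᵀ * V) * diagonal b) * Vᵀ := by simp only [Matrix.mul_assoc]
    _ = V * diagonal (a * b) * Vᵀ := by rw [hV, Matrix.mul_one, diagonal_mul_diagonal]; rfl

lemma trace_conj_diagonal_mul {V : Matrix n n ℝ} (d : n → ℝ) (S : Matrix n n ℝ) :
    (V * diagonal d * Vᵀ * S).trace = ∑ i, d i * (Vᵀ * S * V) i i := by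
  rw [show V * diagonal d * Vᵀ * S = V * (diagonal d * (Vᵀ * S)) by simp only [Matrix.mul_assoc],
    trace_mul_comm, Matrix.mul_assoc]
  simp [trace, diagonal_mul]

lemma isContraction_conj_diagonal {V : Matrix n n ℝ} (hV : Vᵀ * V = 1) {d : n → ℝ}
    (hd : ∀ i, |d i| ≤ 1) : IsContraction (V * diagonal d * Vᵀ) := by
  have h : 1 - (V * diagonal d * Vᵀ)ᵀ * (V * diagonal d * Vᵀ) = V * diagonal (1 - d * d) * Vᵀ := by
    have hsymm : (V * diagonal d * Vᵀ)ᵀ = V * diagonal d * Vᵀ := by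
      simp [transpose_mul, Matrix.mul_assoc]
    rw [hsymm, conj_diagonal_mul_conj_diagonal hV, show diagonal (1 - d * d) = 1 - diagonal (d * d)
      from (diagonal_sub _ _).symm.trans (by rw [Pi.one_def, diagonal_one]), Matrix.mul_sub,
      Matrix.sub_mul, Matrix.mul_one, mul_eq_one_comm.1 hV]
  unfold IsContraction
  rw [h]
  simpa [conjTranspose_eq_transpose_of_trivial] using
    (posSemidef_diagonal_iff.2 fun i => by
      simpa [sub_nonneg, ← sq, sq_le_one_iff_abs_le_one] using hd i).mul_mul_conjTranspose_same V

lemma IsHermitian.exists_eq_mul_diagonal_mul_transpose {Z : Matrix n n ℝ} (hZ : Z.IsHermitian) :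
    ∃ (V : Matrix n n ℝ) (d : n → ℝ), Vᵀ * V = 1 ∧ Z = V * diagonal d * Vᵀ := by
  refine ⟨hZ.eigenvectorUnitary, hZ.eigenvalues, ?_, ?_⟩
  · simpa [star_eq_conjTranspose, conjTranspose_eq_transpose_of_trivial] using
      Unitary.coe_star_mul_self hZ.eigenvectorUnitary
  · conv_lhs => rw [hZ.spectral_theorem]
    simp [star_eq_conjTranspose, conjTranspose_eq_transpose_of_trivial]

lemma abs_le_diag_of_sub_eq_conj_diagonal {X Y V : Matrix n n ℝ} {d : n → ℝ}
    (hX : X.PosSemidef) (hY : Y.PosSemidef) (hV : Vᵀ * V = 1)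
    (hZ : X - Y = V * diagonal d * Vᵀ) (i : n) : |d i| ≤ (Vᵀ * (X + Y) * V) i i := by
  have hx := (hX.conjTranspose_mul_mul_same V).diag_nonneg (i := i)
  have hy := (hY.conjTranspose_mul_mul_same V).diag_nonneg (i := i)
  have hd : d i = (Vᵀ * X * V) i i - (Vᵀ * Y * V) i i := by
    have : Vᵀ * (X - Y) * V = diagonal d := by
      rw [hZ]
      simp only [← Matrix.mul_assoc, hV, Matrix.one_mul]
      rw [Matrix.mul_assoc, hV, Matrix.mul_one]
    rw [← sub_apply, ← Matrix.sub_mul, ← Matrix.mul_sub, this, diagonal_apply_eq]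
  rw [conjTranspose_eq_transpose_of_trivial] at hx hy
  rw [Matrix.mul_add, Matrix.add_mul, add_apply, hd, abs_le]
  constructor <;> linarith

lemma exists_pseudoInverse {P : Matrix n n ℝ} (hP : IsSelfAdjoint P) :
    ∃ Q : Matrix n n ℝ, Qᵀ = Q ∧ P * Q = Q * P ∧ P * Q * P = P ∧ Q * P * Q = Q := by
  have hfin := P.finite_real_spectrum
  have hmul : ∀ f g : ℝ → ℝ, cfc f P * cfc g P = cfc (f * g) P := fun f g =>
    (cfc_mul f g P (hfin.continuousOn _) (hfin.continuousOn _)).symm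
  have hid : cfc id P = P := cfc_id ℝ P
  set inv : ℝ → ℝ := fun x => x⁻¹
  refine ⟨cfc inv P, (isHermitian_iff_isSymm.1 (cfc_predicate _ P)).eq, ?_, ?_, ?_⟩
  · calc P * cfc inv P = cfc id P * cfc inv P := by rw [hid]
      _ = cfc inv P * cfc id P := by rw [hmul, hmul, mul_comm]
      _ = cfc inv P * P := by rw [hid]
  · calc P * cfc inv P * P = cfc id P * cfc inv P * cfc id P := by rw [hid]
      _ = cfc id P := by
        rw [hmul, hmul]
        congr 1
        ext x
        by_cases hx : x = 0 <;> simp [inv, hx]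
      _ = P := hid
  · calc cfc inv P * P * cfc inv P = cfc inv P * cfc id P * cfc inv P := by rw [hid]
      _ = cfc inv P := by
        rw [hmul, hmul]
        congr 1
        ext x
        by_cases hx : x = 0 <;> simp [inv, hx]

lemma exists_polar (W : Matrix n m ℝ) :
    ∃ U : Matrix n m ℝ, U * Uᵀ * U = U ∧ CFC.sqrt (W * Wᵀ) * U = W ∧
      W * Uᵀ = CFC.sqrt (W * Wᵀ) := by
  set P := CFC.sqrt (W * Wᵀ)
  have hPP : P * P = W * Wᵀ := CFC.sqrt_mul_sqrt_self _ <| nonneg_iff_posSemidef.2 <| by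
    simpa [conjTranspose_eq_transpose_of_trivial] using posSemidef_self_mul_conjTranspose W
  have hPt : Pᵀ = P := transpose_sqrt _
  obtain ⟨Q, hQt, hPQ, hPQP, hQPQ⟩ :=
    exists_pseudoInverse (P := P) (CFC.sqrt_nonneg _).isSelfAdjoint
  refine ⟨Q * W, ?_, ?_, ?_⟩
  · calc Q * W * (Q * W)ᵀ * (Q * W) = Q * (W * Wᵀ) * Q * Q * W := by
          rw [transpose_mul, hQt]; simp only [Matrix.mul_assoc]
      _ = Q * P * (P * Q) * Q * W := by rw [← hPP]; simp only [Matrix.mul_assoc]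
      _ = Q * P * Q * P * Q * W := by rw [hPQ]; simp only [Matrix.mul_assoc]
      _ = Q * W := by rw [hQPQ, hQPQ]
  · have hgram : (W - P * Q * W) * (W - P * Q * W)ᵀ = 0 := by
      calc (W - P * Q * W) * (W - P * Q * W)ᵀ
          = (1 - P * Q) * (W * Wᵀ) * (1 - P * Q)ᵀ := by
            rw [show W - P * Q * W = (1 - P * Q) * W by rw [Matrix.sub_mul, Matrix.one_mul],
              transpose_mul]
            simp only [Matrix.mul_assoc]
        _ = ((1 - P * Q) * P) * ((1 - P * Q) * P)ᵀ := by
            rw [← hPP, transpose_mul, hPt]; simp only [Matrix.mul_assoc]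
        _ = 0 := by rw [Matrix.sub_mul, Matrix.one_mul, hPQP, sub_self, Matrix.zero_mul]
    rw [← conjTranspose_eq_transpose_of_trivial, self_mul_conjTranspose_eq_zero,
      sub_eq_zero] at hgram
    rw [← Matrix.mul_assoc, ← hgram]
  · calc W * (Q * W)ᵀ = P * (P * Q) := by
          rw [transpose_mul, hQt, ← Matrix.mul_assoc, ← hPP, Matrix.mul_assoc]
      _ = P := by rw [hPQ, ← Matrix.mul_assoc, hPQP]

lemma transpose_mul_eq_sqrt_of_polar [DecidableEq m] {W U : Matrix n m ℝ}
    (hPU : CFC.sqrt (W * Wᵀ) * U = W) (hWU : W * Uᵀ = CFC.sqrt (W * Wᵀ)) :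
    Uᵀ * W = CFC.sqrt (Wᵀ * W) := by
  set P := CFC.sqrt (W * Wᵀ)
  have hP : 0 ≤ P := CFC.sqrt_nonneg _
  have hPt : Pᵀ = P := transpose_sqrt _
  refine (CFC.sqrt_unique ?_ ?_).symm
  · calc Uᵀ * W * (Uᵀ * W) = (P * U)ᵀ * W := by
          rw [Matrix.mul_assoc, ← Matrix.mul_assoc W, hWU, transpose_mul, hPt, Matrix.mul_assoc]
      _ = Wᵀ * W := by rw [hPU]
  · rw [← hPU, ← Matrix.mul_assoc, nonneg_iff_posSemidef]
    simpa [conjTranspose_eq_transpose_of_trivial] using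
      (nonneg_iff_posSemidef.1 hP).conjTranspose_mul_mul_same U

end Matrix

lemma nuclearNorm_eq_trace_sqrt {m n : ℕ} (W : Matrix (Fin m) (Fin n) ℝ) :
    nuclearNorm W = (CFC.sqrt (W * Wᵀ)).trace := by
  have hG := wwT_posSemidef W
  rw [CFC.sqrt_eq_real_sqrt _ (nonneg_iff_posSemidef.2 hG), cfcₙ_eq_cfc, hG.1.cfc_eq,
    IsHermitian.cfc, nuclearNorm, RCLike.ofReal_real_eq_id, Function.id_comp]
  rfl

lemma nuclearNorm_eq_trace_sqrt_transpose_mul_self {m n : ℕ} (W : Matrix (Fin m) (Fin n) ℝ) :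
    nuclearNorm W = (CFC.sqrt (Wᵀ * W)).trace := by
  obtain ⟨U, -, hPU, hWU⟩ := exists_polar W
  rw [nuclearNorm_eq_trace_sqrt, ← transpose_mul_eq_sqrt_of_polar hPU hWU, ← hWU, trace_mul_comm]

lemma Matrix.IsContraction.trace_mul_le_nuclearNorm {m n : ℕ} {Q : Matrix (Fin n) (Fin m) ℝ}
    (hQ : IsContraction Q) (W : Matrix (Fin m) (Fin n) ℝ) : (Q * W).trace ≤ nuclearNorm W := by
  obtain ⟨U, hU, hPU, -⟩ := exists_polar W
  have hP : (CFC.sqrt (W * Wᵀ)).PosSemidef := nonneg_iff_posSemidef.1 (CFC.sqrt_nonneg _)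
  calc (Q * W).trace = (CFC.sqrt (W * Wᵀ) * (U * Q)).trace := by
        conv_lhs => rw [← hPU]
        rw [trace_mul_comm, Matrix.mul_assoc]
    _ ≤ nuclearNorm W := by
        rw [nuclearNorm_eq_trace_sqrt]
        exact (isContraction_of_mul_transpose_mul_eq_self hU).mul hQ |>.trace_mul_le hP

lemma frobSq_eq_trace {m n : ℕ} (A : Matrix (Fin m) (Fin n) ℝ) : frobSq A = (Aᵀ * A).trace := by
  rw [frobSq, trace, Finset.sum_comm]
  simp [mul_apply, sq]

lemma nuclearNorm_mul_transpose_le {m n r : ℕ} (A : Matrix (Fin m) (Fin r) ℝ)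
    (B : Matrix (Fin n) (Fin r) ℝ) : nuclearNorm (A * Bᵀ) ≤ (frobSq A + frobSq B) / 2 := by
  obtain ⟨U, hU, hPU, hWU⟩ := exists_polar (A * Bᵀ)
  calc nuclearNorm (A * Bᵀ) = (Bᵀ * (Uᵀ * A)).trace := by
        rw [nuclearNorm_eq_trace_sqrt, ← hWU, Matrix.mul_assoc, trace_mul_comm, Matrix.mul_assoc]
    _ ≤ ((Bᵀ * B).trace + ((Uᵀ * A)ᵀ * (Uᵀ * A)).trace) / 2 := by
        simpa using trace_transpose_mul_le B (Uᵀ * A)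
    _ ≤ ((Bᵀ * B).trace + (Aᵀ * A).trace) / 2 := by
        gcongr
        exact (isContraction_transpose_of_mul_transpose_mul_eq_self hU)
          |>.trace_transpose_mul_self_mul_le A
    _ = (frobSq A + frobSq B) / 2 := by rw [frobSq_eq_trace, frobSq_eq_trace, add_comm]

lemma trace_sqrt_mul_sqrt_le_nuclearNorm {m n r : ℕ} (A : Matrix (Fin m) (Fin r) ℝ)
    (B : Matrix (Fin n) (Fin r) ℝ) :
    (CFC.sqrt (Aᵀ * A) * CFC.sqrt (Bᵀ * B)).trace ≤ nuclearNorm (A * Bᵀ) := by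
  obtain ⟨UA, hUA, hPUA, hWUA⟩ := exists_polar A
  obtain ⟨UB, hUB, hPUB, hWUB⟩ := exists_polar B
  have hQ : IsContraction (UB * UAᵀ) := (isContraction_of_mul_transpose_mul_eq_self hUB).mul
    (isContraction_transpose_of_mul_transpose_mul_eq_self hUA)
  calc (CFC.sqrt (Aᵀ * A) * CFC.sqrt (Bᵀ * B)).trace = (UB * UAᵀ * (A * Bᵀ)).trace := by
        rw [← transpose_mul_eq_sqrt_of_polar hPUA hWUA, ← transpose_sqrt (Bᵀ * B),
          ← transpose_mul_eq_sqrt_of_polar hPUB hWUB, transpose_mul, transpose_transpose,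
          ← Matrix.mul_assoc, trace_mul_comm]
        simp only [Matrix.mul_assoc]
    _ ≤ nuclearNorm (A * Bᵀ) := hQ.trace_mul_le_nuclearNorm _

lemma trace_conj_diagonal_mul_le_mul_nuclearNorm {r : ℕ} {V : Matrix (Fin r) (Fin r) ℝ}
    (hV : Vᵀ * V = 1) {d : Fin r → ℝ} {c : ℝ} (hc : 0 < c) (hd : ∀ i, |d i| ≤ c)
    (W : Matrix (Fin r) (Fin r) ℝ) : (V * diagonal d * Vᵀ * W).trace ≤ c * nuclearNorm W := by
  have hQ : IsContraction (V * diagonal (c⁻¹ • d) * Vᵀ) :=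
    isContraction_conj_diagonal hV fun i => by
      rw [Pi.smul_apply, smul_eq_mul, abs_mul, abs_inv, abs_of_pos hc]
      exact inv_mul_le_one_of_le₀ (hd i) hc.le
  calc (V * diagonal d * Vᵀ * W).trace = c * (V * diagonal (c⁻¹ • d) * Vᵀ * W).trace := by
        rw [diagonal_smul, Matrix.mul_smul, Matrix.smul_mul, Matrix.smul_mul, trace_smul,
          smul_eq_mul, ← mul_assoc, mul_inv_cancel₀ hc.ne', one_mul]
    _ ≤ c * nuclearNorm W := mul_le_mul_of_nonneg_left (hQ.trace_mul_le_nuclearNorm W) hc.le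

lemma abs_le_sqrt_nuclearNorm_of_sub_eq_conj_diagonal {r : ℕ}
    {X Y V : Matrix (Fin r) (Fin r) ℝ} {d : Fin r → ℝ} (hX : X.PosSemidef) (hY : Y.PosSemidef)
    (hV : Vᵀ * V = 1) (hZ : X - Y = V * diagonal d * Vᵀ) (i : Fin r) :
    |d i| ≤ √(nuclearNorm (X * X - Y * Y)) := by
  have : Nonempty (Fin r) := ⟨i⟩
  obtain ⟨i₀, hi₀⟩ := Finite.exists_max (fun i => |d i|)
  refine (hi₀ i).trans ?_
  rcases (abs_nonneg (d i₀)).eq_or_lt with hc | hc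
  · rw [← hc]; exact Real.sqrt_nonneg _
  have hdE := abs_le_diag_of_sub_eq_conj_diagonal hX hY hV hZ
  have hupper : ((X - Y) * (X * X - Y * Y)).trace ≤ |d i₀| * nuclearNorm (X * X - Y * Y) := by
    rw [hZ]
    exact trace_conj_diagonal_mul_le_mul_nuclearNorm hV hc hi₀ _
  have hlower : |d i₀| ^ 3 ≤ ((X - Y) * (X * X - Y * Y)).trace := by
    rw [trace_sub_mul_mul_self_sub_mul_self, hZ, conj_diagonal_mul_conj_diagonal hV,
      trace_conj_diagonal_mul]
    calc |d i₀| ^ 3 = |d i₀| * |d i₀| * |d i₀| := by ring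
      _ ≤ d i₀ * d i₀ * (Vᵀ * (X + Y) * V) i₀ i₀ := by
          rw [abs_mul_abs_self]
          exact mul_le_mul_of_nonneg_left (hdE i₀) (mul_self_nonneg _)
      _ ≤ ∑ i, (d * d) i * (Vᵀ * (X + Y) * V) i i :=
          Finset.single_le_sum (f := fun i => (d * d) i * (Vᵀ * (X + Y) * V) i i)
            (fun i _ => mul_nonneg (mul_self_nonneg _) ((abs_nonneg _).trans (hdE i)))
            (Finset.mem_univ i₀)
  refine Real.le_sqrt_of_sq_le (le_of_mul_le_mul_left ?_ hc)
  nlinarith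

lemma trace_sub_mul_sub_le {r : ℕ} {X Y : Matrix (Fin r) (Fin r) ℝ} (hX : X.PosSemidef)
    (hY : Y.PosSemidef) :
    ((X - Y) * (X - Y)).trace ≤ √(nuclearNorm (X * X - Y * Y)) * (X.trace + Y.trace) := by
  obtain ⟨V, d, hV, hZ⟩ := (hX.1.sub hY.1).exists_eq_mul_diagonal_mul_transpose
  calc ((X - Y) * (X - Y)).trace = ∑ i, |d i| * |d i| := by
        simp [hZ, conj_diagonal_mul_conj_diagonal hV, trace_mul_cycle, hV, abs_mul_abs_self]
    _ ≤ ∑ i, √(nuclearNorm (X * X - Y * Y)) * (Vᵀ * (X + Y) * V) i i :=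
        Finset.sum_le_sum fun i _ => mul_le_mul
          (abs_le_sqrt_nuclearNorm_of_sub_eq_conj_diagonal hX hY hV hZ i)
          (abs_le_diag_of_sub_eq_conj_diagonal hX hY hV hZ i) (abs_nonneg _) (Real.sqrt_nonneg _)
    _ = √(nuclearNorm (X * X - Y * Y)) * (X.trace + Y.trace) := by
        rw [← Finset.mul_sum, ← trace_add]
        congr 1
        rw [show ∑ i, (Vᵀ * (X + Y) * V) i i = (Vᵀ * (X + Y) * V).trace from rfl,
          trace_mul_cycle, mul_eq_one_comm.1 hV, Matrix.one_mul]

/-- `| ‖ABᵀ‖_* − (‖A‖_F² + ‖B‖_F²)/2 | ≤ √(‖AᵀA − BᵀB‖_*) · (‖A‖_* + ‖B‖_*)/2`. -/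
theorem nuclearNorm_gap_bound_sym {m n r : ℕ}
    (A : Matrix (Fin m) (Fin r) ℝ) (B : Matrix (Fin n) (Fin r) ℝ) :
    |nuclearNorm (A * Bᵀ) - (frobSq A + frobSq B) / 2| ≤
      Real.sqrt (nuclearNorm (Aᵀ * A - Bᵀ * B)) * (nuclearNorm A + nuclearNorm B) / 2 := by
  set X := CFC.sqrt (Aᵀ * A)
  set Y := CFC.sqrt (Bᵀ * B)
  have hX : X.PosSemidef := nonneg_iff_posSemidef.1 (CFC.sqrt_nonneg _)
  have hY : Y.PosSemidef := nonneg_iff_posSemidef.1 (CFC.sqrt_nonneg _)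
  have hXX : X * X = Aᵀ * A :=
    CFC.sqrt_mul_sqrt_self _ (nonneg_iff_posSemidef.2 (by simpa using wwT_posSemidef Aᵀ))
  have hYY : Y * Y = Bᵀ * B :=
    CFC.sqrt_mul_sqrt_self _ (nonneg_iff_posSemidef.2 (by simpa using wwT_posSemidef Bᵀ))
  have hgap : frobSq A + frobSq B - 2 * (X * Y).trace = ((X - Y) * (X - Y)).trace := by
    rw [frobSq_eq_trace, frobSq_eq_trace, ← hXX, ← hYY, Matrix.sub_mul, Matrix.mul_sub,
      Matrix.mul_sub, trace_sub, trace_sub, trace_sub, trace_mul_comm Y X]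
    ring
  have hkey := trace_sub_mul_sub_le hX hY
  rw [hXX, hYY, ← nuclearNorm_eq_trace_sqrt_transpose_mul_self,
    ← nuclearNorm_eq_trace_sqrt_transpose_mul_self] at hkey
  have hlower := trace_sqrt_mul_sqrt_le_nuclearNorm A B
  have hupper := nuclearNorm_mul_transpose_le A B
  have hnonneg : 0 ≤ √(nuclearNorm (Aᵀ * A - Bᵀ * B)) * (nuclearNorm A + nuclearNorm B) := by
    rw [nuclearNorm_eq_trace_sqrt_transpose_mul_self A,
      nuclearNorm_eq_trace_sqrt_transpose_mul_self B]
    exact mul_nonneg (Real.sqrt_nonneg _) (add_nonneg hX.trace_nonneg hY.trace_nonneg)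
  rw [abs_le]
  constructor <;> linarith
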